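/- arXiv:2202.07149 — 3 statements merged into one kernel-verified Lean document; each statement's English description precedes it below -/
import Mathlib

section
/- Let G be a C_3^{(3)}-saturated 3-uniform hypergraph and let h be a vertex of G. Then there are at most 9 vertices u ≠ h with 1 ≤ d(u) ≤ 8 and d(hu) = d(u). -/
open Finset

variable {V : Type*}

/-- `E` is the edge set of a 3-uniform hypergraph: every edge has 3 vertices. -/
def IsUniform3 [DecidableEq V] (E : Finset (Finset V)) : Prop :=
  ∀ e ∈ E, e.card = 3

/-- `E` contains a copy of the loose cycle `C₃⁽³⁾`: three edges whose pairwise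
intersections are three distinct single vertices, with empty triple intersection. -/
def HasC3 [DecidableEq V] (E : Finset (Finset V)) : Prop :=
  ∃ e₁ ∈ E, ∃ e₂ ∈ E, ∃ e₃ ∈ E, ∃ a b c : V,
    e₁ ∩ e₂ = {a} ∧ e₂ ∩ e₃ = {b} ∧ e₁ ∩ e₃ = {c} ∧
    a ≠ b ∧ b ≠ c ∧ a ≠ c ∧ e₁ ∩ e₂ ∩ e₃ = ∅

/-- `E` is a `C₃⁽³⁾`-saturated 3-uniform hypergraph: it is 3-uniform, `C₃⁽³⁾`-free,
and adding any non-edge triple creates a copy of `C₃⁽³⁾`. -/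
def IsSat3 [DecidableEq V] (E : Finset (Finset V)) : Prop :=
  IsUniform3 E ∧ ¬ HasC3 E ∧
    ∀ e : Finset V, e.card = 3 → e ∉ E → HasC3 (insert e E)

/-- The degree of a vertex: the number of edges containing it. -/
def deg [DecidableEq V] (E : Finset (Finset V)) (v : V) : ℕ :=
  (E.filter fun e => v ∈ e).card

/-- The codegree of a pair of vertices: number of edges containing both. -/
def codeg [DecidableEq V] (E : Finset (Finset V)) (u v : V) : ℕ :=
  (E.filter fun e => u ∈ e ∧ v ∈ e).card

/-- `u` and `v` are distinct and share an edge (`v ∈ N(u)`). -/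
def Adj [DecidableEq V] (E : Finset (Finset V)) (u v : V) : Prop :=
  u ≠ v ∧ ∃ e ∈ E, u ∈ e ∧ v ∈ e

/-- `e₁, e₂` form a `u,v`-link: a loose path of two edges from `u` to `v`. -/
def IsLink [DecidableEq V] (E : Finset (Finset V)) (u v : V) (e₁ e₂ : Finset V) : Prop :=
  e₁ ∈ E ∧ e₂ ∈ E ∧ u ∈ e₁ ∧ v ∈ e₂ ∧ u ∉ e₂ ∧ v ∉ e₁ ∧
    ∃ w, w ∉ ({u, v} : Finset V) ∧ e₁ ∩ e₂ = {w}

/-- `uv` is a good pair: there exists a `u,v`-link. -/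
def GoodPair [DecidableEq V] (E : Finset (Finset V)) (u v : V) : Prop :=
  ∃ e₁ e₂, IsLink E u v e₁ e₂

/-! If `d(hu) = d(u)` then every edge through `u` passes through `h`. For two such vertices
`u ≠ v` the triple `{u, v, h}` is already an edge: every edge of `G` that meets it in a single
vertex meets it in `h`, so it cannot lie on a loose triangle of `G + {u, v, h}`. Fixing one such
`u`, the edges `{u, v, h}` are distinct edges through `u`, so there are at most `d(u) + 1 ≤ 9`
such vertices. -/

section Saturation

variable [DecidableEq V] {E : Finset (Finset V)}

lemma forall_mem_of_codeg_eq_deg {h u : V} (hc : codeg E h u = deg E u) :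
    ∀ e ∈ E, u ∈ e → h ∈ e := by
  have hsub : E.filter (fun e => h ∈ e ∧ u ∈ e) ⊆ E.filter (fun e => u ∈ e) :=
    fun _ he => Finset.mem_filter.2 ⟨(Finset.mem_filter.1 he).1, (Finset.mem_filter.1 he).2.2⟩
  have heq := Finset.eq_of_subset_of_card_le hsub hc.ge
  intro e he hue
  have : e ∈ E.filter (fun e => h ∈ e ∧ u ∈ e) := heq ▸ Finset.mem_filter.2 ⟨he, hue⟩
  exact (Finset.mem_filter.1 this).2.1

lemma not_hasC3_insert {t : Finset V} {h : V} (hE : ¬ HasC3 E) (hh : h ∈ t)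
    (hdom : ∀ x ∈ t, ∀ f ∈ E, x ∈ f → h ∈ f) : ¬ HasC3 (insert t E) := by
  have meets_at_h : ∀ f ∈ E, ∀ α, t ∩ f = {α} → α = h := by
    intro f hf α htf
    have hα : α ∈ t ∩ f := htf ▸ Finset.mem_singleton_self α
    obtain ⟨hαt, hαf⟩ := Finset.mem_inter.1 hα
    have : h ∈ t ∩ f := Finset.mem_inter.2 ⟨hh, hdom α hαt f hf hαf⟩
    exact (Finset.mem_singleton.1 (htf ▸ this)).symm
  have mem_left : ∀ {s f : Finset V} {y : V}, s ∩ f = {y} → y ∈ s :=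
    fun hsf => (Finset.mem_inter.1 (hsf ▸ Finset.mem_singleton_self _)).1
  have mem_right : ∀ {s f : Finset V} {y : V}, s ∩ f = {y} → y ∈ f :=
    fun hsf => (Finset.mem_inter.1 (hsf ▸ Finset.mem_singleton_self _)).2
  rintro ⟨e₁, he₁, e₂, he₂, e₃, he₃, a, b, c, h₁₂, h₂₃, h₁₃, hab, hbc, hac, h₁₂₃⟩
  -- Split on which edges are `t`; two equal edges force two of `a, b, c` to coincide.
  rcases Finset.mem_insert.1 he₁ with rfl | he₁E <;>
    rcases Finset.mem_insert.1 he₂ with rfl | he₂E <;>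
    rcases Finset.mem_insert.1 he₃ with rfl | he₃E
  · exact hab (Finset.singleton_inj.1 (h₁₂.symm.trans h₂₃))
  · rw [Finset.inter_self] at h₁₂
    exact hac (Finset.mem_singleton.1 (h₁₂ ▸ mem_left h₁₃)).symm
  · rw [Finset.inter_self] at h₁₃
    exact hac (Finset.mem_singleton.1 (h₁₃ ▸ mem_left h₁₂))
  · exact hac ((meets_at_h e₂ he₂E a h₁₂).trans (meets_at_h e₃ he₃E c h₁₃).symm)
  · rw [Finset.inter_self] at h₂₃
    exact hab (Finset.mem_singleton.1 (h₂₃ ▸ mem_right h₁₂))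
  · rw [Finset.inter_comm] at h₁₂
    exact hab ((meets_at_h e₁ he₁E a h₁₂).trans (meets_at_h e₃ he₃E b h₂₃).symm)
  · rw [Finset.inter_comm] at h₂₃ h₁₃
    exact hbc ((meets_at_h e₂ he₂E b h₂₃).trans (meets_at_h e₁ he₁E c h₁₃).symm)
  · exact hE ⟨e₁, he₁E, e₂, he₂E, e₃, he₃E, a, b, c, h₁₂, h₂₃, h₁₃, hab, hbc, hac, h₁₂₃⟩

lemma mem_of_isSat3 {t : Finset V} {h : V} (hsat : IsSat3 E) (ht : t.card = 3) (hh : h ∈ t)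
    (hdom : ∀ x ∈ t, ∀ f ∈ E, x ∈ f → h ∈ f) : t ∈ E := by
  by_contra htE
  exact not_hasC3_insert hsat.2.1 hh hdom (hsat.2.2 t ht htE)

lemma ncard_le_deg_add_one (hsat : IsSat3 E) {h u : V} {S : Set V}
    (hS : ∀ v ∈ S, v ≠ h ∧ ∀ e ∈ E, v ∈ e → h ∈ e) (hu : u ∈ S) :
    S.ncard ≤ deg E u + 1 := by
  obtain ⟨huh, hudom⟩ := hS u hu
  have hmaps : ∀ v ∈ S \ {u}, ({u, v, h} : Finset V) ∈ (E.filter (u ∈ ·) : Set (Finset V)) := by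
    rintro v ⟨hvS, hvu⟩
    obtain ⟨hvh, hvdom⟩ := hS v hvS
    have hcard : ({u, v, h} : Finset V).card = 3 :=
      Finset.card_eq_three.2 ⟨u, v, h, Ne.symm hvu, huh, hvh, rfl⟩
    refine Finset.mem_filter.2 ⟨mem_of_isSat3 (h := h) hsat hcard (by simp) ?_, by simp⟩
    simp only [Finset.mem_insert, Finset.mem_singleton]
    rintro x (rfl | rfl | rfl) f hf hxf
    exacts [hudom f hf hxf, hvdom f hf hxf, hxf]
  have hinj : Set.InjOn (fun v => ({u, v, h} : Finset V)) (S \ {u}) := by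
    rintro v ⟨hvS, hvu⟩ w - (huvw : ({u, v, h} : Finset V) = {u, w, h})
    have hv : v ∈ ({u, w, h} : Finset V) := by rw [← huvw]; simp
    simp only [Finset.mem_insert, Finset.mem_singleton] at hv
    rcases hv with rfl | rfl | rfl
    exacts [absurd rfl hvu, rfl, absurd rfl (hS v hvS).1]
  calc S.ncard = (insert u (S \ {u})).ncard := by
        rw [Set.insert_sdiff_singleton, Set.insert_eq_of_mem hu]
    _ ≤ (S \ {u}).ncard + 1 := Set.ncard_insert_le _ _
    _ ≤ deg E u + 1 := by
        gcongr
        have := Set.ncard_le_ncard_of_injOn _ hmaps hinj (Finset.finite_toSet _)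
        rwa [Set.ncard_coe_finset] at this

end Saturation

theorem at_most_nine_full_codeg_neighbors_general {V : Type*} [DecidableEq V]
    (E : Finset (Finset V)) (hsat : IsSat3 E) (h : V) :
    ({u : V | u ≠ h ∧ 1 ≤ deg E u ∧ deg E u ≤ 8 ∧ codeg E h u = deg E u}).ncard ≤ 9 := by
  set S := {u : V | u ≠ h ∧ 1 ≤ deg E u ∧ deg E u ≤ 8 ∧ codeg E h u = deg E u}
  rcases S.eq_empty_or_nonempty with hS | ⟨u, hu⟩
  · simp [hS]
  have hdom : ∀ v ∈ S, v ≠ h ∧ ∀ e ∈ E, v ∈ e → h ∈ e :=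
    fun v hv => ⟨hv.1, forall_mem_of_codeg_eq_deg hv.2.2.2⟩
  calc S.ncard ≤ deg E u + 1 := ncard_le_deg_add_one hsat hdom hu
    _ ≤ 9 := Nat.add_le_add_right hu.2.2.1 1

theorem at_most_nine_full_codeg_neighbors {V : Type*} [Fintype V] [DecidableEq V]
    (E : Finset (Finset V)) (hsat : IsSat3 E) (h : V) :
    ({u : V | u ≠ h ∧ 1 ≤ deg E u ∧ deg E u ≤ 8 ∧ codeg E h u = deg E u}).ncard ≤ 9 :=
  at_most_nine_full_codeg_neighbors_general E hsat h
end

section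
/- Let G be a C_3^{(3)}-saturated 3-uniform hypergraph on n ≥ 6 vertices and let {h, v_1, v_2} ∈ E(G) be an edge with d(v_1) = 2, d(v_2) ∈ {2, 3}, d(hv_1) = 1, and d(hv_2) < d(v_2). Then both hv_1 and hv_2 are bad pairs. -/
/-!
Two facts drive the proof. In a `C₃⁽³⁾`-free hypergraph a `u,v`-link meets the third vertex of
every edge through `u` and `v`; in a saturated one, every non-edge `{x, y, z}` such that each
edge through `x` meets `y` or `z` contains a `y,z`-link avoiding `x`.

Let `e'` be the second edge at `v₁`; `h ∉ e'` as `d(hv₁) = 1`. First, `v₂ ∉ e'`: otherwise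
`e' = {v₁, v₂, c}`, saturation at `{v₁, v₂, z}` for a fifth vertex `z` gives a third edge `g` at
`v₂`, saturation at `{v₁, v₂, p}` for `p ∈ g` forces `g = {h, v₂, c}`, and saturation at
`{v₁, h, c}` gives an `h,c`-link missing `v₂`. An `h,v₂`-link must then meet `v₁`, which neither
edge at `v₁` allows. An `h,v₁`-link `(E₁, e')` puts `v₂` in `E₁ = {h, v₂, w}`. The
`v₂,w`-link obtained by saturation at `{v₁, v₂, w}` must meet `h` because of `E₁`, and since
`d(hv₂) ≤ 2` it does so in its second edge, which makes it a `v₂,h`-link avoiding `v₁`.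
-/

open Finset

variable {V : Type*}

section FinsetLemmas

variable {α : Type*} {s t u : Finset α} {a b c x : α}

theorem Finset.mem_of_subset_filter_of_card_le {p : α → Prop} [DecidablePred p]
    (hu : u ⊆ s.filter p) (hcard : (s.filter p).card ≤ u.card) (hx : x ∈ s) (hpx : p x) :
    x ∈ u :=
  eq_of_subset_of_card_le hu hcard ▸ mem_filter.mpr ⟨hx, hpx⟩

variable [DecidableEq α]

theorem Finset.mem_of_inter_eq_singleton (h : s ∩ t = {a}) : a ∈ s ∧ a ∈ t :=
  mem_inter.mp (h ▸ mem_singleton_self a)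

theorem Finset.eq_of_mem_of_inter_eq_singleton (h : s ∩ t = {a}) (hs : x ∈ s) (ht : x ∈ t) :
    x = a :=
  mem_singleton.mp (h ▸ mem_inter.mpr ⟨hs, ht⟩)

theorem Finset.ne_of_card_eq_three (h : ({a, b, c} : Finset α).card = 3) :
    a ≠ b ∧ a ≠ c ∧ b ≠ c := by
  refine ⟨?_, ?_, ?_⟩ <;> rintro rfl <;>
    simp only [mem_insert, mem_singleton, true_or, or_true, insert_eq_of_mem] at h <;>
    exact absurd h (card_le_two.trans_lt (by norm_num)).ne

theorem Finset.eq_of_card_eq_three (hs : s.card = 3) (ha : a ∈ s) (hb : b ∈ s) (hc : c ∈ s)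
    (hab : a ≠ b) (hac : a ≠ c) (hbc : b ≠ c) : s = {a, b, c} :=
  (eq_of_subset_of_card_le (by simp [insert_subset_iff, ha, hb, hc])
    (by simp [card_insert_of_notMem, hab, hac, hbc, hs])).symm

theorem Finset.exists_eq_of_card_eq_three (hs : s.card = 3) (ha : a ∈ s) (hb : b ∈ s)
    (hab : a ≠ b) : ∃ c, c ≠ a ∧ c ≠ b ∧ s = {a, b, c} := by
  have hcard : (s \ {a, b}).card = 1 := by
    rw [card_sdiff_of_subset (by simp [insert_subset_iff, ha, hb]), hs, card_pair hab]
  obtain ⟨c, hc⟩ := card_eq_one.mp hcard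
  have hcs : c ∈ s \ {a, b} := hc ▸ mem_singleton_self c
  simp only [mem_sdiff, mem_insert, mem_singleton, not_or] at hcs
  exact ⟨c, hcs.2.1, hcs.2.2, eq_of_card_eq_three hs ha hb hcs.1 hab (Ne.symm hcs.2.1)
    (Ne.symm hcs.2.2)⟩

end FinsetLemmas

section Hypergraphs

variable {V : Type*} [DecidableEq V] {E : Finset (Finset V)}

/-- A copy of `C₃⁽³⁾` in cyclic order; the condition `e₁ ∩ e₂ ∩ e₃ = ∅` of `HasC3` follows from
the others. -/
def IsLooseTriangle (e₁ e₂ e₃ : Finset V) : Prop :=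
  ∃ a b c : V, e₁ ∩ e₂ = {a} ∧ e₂ ∩ e₃ = {b} ∧ e₃ ∩ e₁ = {c} ∧ a ≠ b ∧ b ≠ c ∧ c ≠ a

theorem IsLooseTriangle.rotate {e₁ e₂ e₃ : Finset V} (h : IsLooseTriangle e₁ e₂ e₃) :
    IsLooseTriangle e₂ e₃ e₁ :=
  let ⟨a, b, c, h₁₂, h₂₃, h₃₁, hab, hbc, hca⟩ := h
  ⟨b, c, a, h₂₃, h₃₁, h₁₂, hbc, hca, hab⟩

theorem HasC3.exists_isLooseTriangle (h : HasC3 E) :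
    ∃ e₁ ∈ E, ∃ e₂ ∈ E, ∃ e₃ ∈ E, IsLooseTriangle e₁ e₂ e₃ :=
  let ⟨e₁, h₁, e₂, h₂, e₃, h₃, a, b, c, h₁₂, h₂₃, h₁₃, hab, hbc, hac, _⟩ := h
  ⟨e₁, h₁, e₂, h₂, e₃, h₃, a, b, c, h₁₂, h₂₃, inter_comm e₁ e₃ ▸ h₁₃, hab, hbc, hac.symm⟩

theorem hasC3_of_isLooseTriangle {e₁ e₂ e₃ : Finset V} (h₁ : e₁ ∈ E) (h₂ : e₂ ∈ E)
    (h₃ : e₃ ∈ E) (T : IsLooseTriangle e₁ e₂ e₃) : HasC3 E := by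
  obtain ⟨a, b, c, h₁₂, h₂₃, h₃₁, hab, hbc, hca⟩ := T
  refine ⟨e₁, h₁, e₂, h₂, e₃, h₃, a, b, c, h₁₂, h₂₃, inter_comm e₃ e₁ ▸ h₃₁, hab, hbc,
    hca.symm, ?_⟩
  rw [h₁₂, singleton_inter_of_notMem]
  exact fun ha₃ => hab (eq_of_mem_of_inter_eq_singleton h₂₃
    (mem_of_inter_eq_singleton h₁₂).2 ha₃)

theorem IsLink.symm {u v : V} {e₁ e₂ : Finset V} (h : IsLink E u v e₁ e₂) :
    IsLink E v u e₂ e₁ :=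
  let ⟨h₁, h₂, hu, hv, hu₂, hv₁, w, hw, hi⟩ := h
  ⟨h₂, h₁, hv, hu, hv₁, hu₂, w, pair_comm u v ▸ hw, inter_comm e₁ e₂ ▸ hi⟩

theorem IsLink.of_mem_right {u v x : V} {e₁ e₂ : Finset V} (h : IsLink E u v e₁ e₂)
    (hx₂ : x ∈ e₂) (hx₁ : x ∉ e₁) : IsLink E u x e₁ e₂ := by
  obtain ⟨h₁, h₂, hu, -, hu₂, -, w, hw, hi⟩ := h
  have hw₁ : w ∈ e₁ := (mem_of_inter_eq_singleton hi).1
  refine ⟨h₁, h₂, hu, hx₂, hu₂, hx₁, w, ?_, hi⟩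
  simp only [mem_insert, mem_singleton, not_or] at hw ⊢
  exact ⟨hw.1, fun hwx => hx₁ (hwx ▸ hw₁)⟩

/-- Otherwise `{u, v, x}` closes the link into a `C₃⁽³⁾`. -/
theorem IsLink.mem_or_mem_of_not_hasC3 (hfree : ¬ HasC3 E) {u v x : V} {e₁ e₂ : Finset V}
    (h : IsLink E u v e₁ e₂) (he : {u, v, x} ∈ E) : x ∈ e₁ ∨ x ∈ e₂ := by
  obtain ⟨h₁, h₂, hu, hv, hu₂, hv₁, w, hw, hi⟩ := h
  by_contra! hx
  simp only [mem_insert, mem_singleton, not_or] at hw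
  refine hfree (hasC3_of_isLooseTriangle he h₁ h₂ ⟨u, w, v, ?_, hi, ?_, Ne.symm hw.1, hw.2,
    fun hvu => hv₁ (hvu ▸ hu)⟩)
  · simp [insert_inter_of_mem, insert_inter_of_notMem, hu, hv₁, hx.1]
  · simp [inter_insert_of_mem, inter_insert_of_notMem, hu₂, hv, hx.2]

theorem IsSat3.exists_isLink_of_notMem (hsat : IsSat3 E) {t : Finset V} (ht : t.card = 3)
    (htE : t ∉ E) : ∃ a ∈ t, ∃ c ∈ t, ∃ f g, IsLink E a c f g ∧ t ∩ f = {a} ∧ t ∩ g = {c} := by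
  -- the `C₃⁽³⁾` created by adding `t` must use `t`; rotate it so that `t` comes first
  have rooted : ∀ f ∈ insert t E, ∀ g ∈ insert t E, IsLooseTriangle t f g →
      ∃ a ∈ t, ∃ c ∈ t, ∃ f g, IsLink E a c f g ∧ t ∩ f = {a} ∧ t ∩ g = {c} := by
    intro f hf g hg ⟨a, b, c, htf, hfg, hgt, hab, hbc, hca⟩
    have hgt' : t ∩ g = {c} := inter_comm g t ▸ hgt
    have hft : f ≠ t := by rintro rfl; rw [inter_self] at htf; simp [htf] at ht
    have hgt'' : g ≠ t := by rintro rfl; rw [inter_self] at hgt'; simp [hgt'] at ht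
    have ha := mem_of_inter_eq_singleton htf
    have hc := mem_of_inter_eq_singleton hgt'
    refine ⟨a, ha.1, c, hc.1, f, g, ⟨(mem_insert.mp hf).resolve_left hft,
      (mem_insert.mp hg).resolve_left hgt'', ha.2, hc.2, ?_, ?_, b, ?_, hfg⟩, htf, hgt'⟩
    · exact fun hag => hca (eq_of_mem_of_inter_eq_singleton hgt' ha.1 hag).symm
    · exact fun hcf => hca (eq_of_mem_of_inter_eq_singleton htf hc.1 hcf)
    · simp only [mem_insert, mem_singleton, not_or]
      exact ⟨hab.symm, hbc⟩
  obtain ⟨e₁, h₁, e₂, h₂, e₃, h₃, T⟩ := (hsat.2.2 t ht htE).exists_isLooseTriangle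
  rcases mem_insert.mp h₁ with rfl | h₁E
  · exact rooted e₂ h₂ e₃ h₃ T
  rcases mem_insert.mp h₂ with rfl | h₂E
  · exact rooted e₃ h₃ e₁ h₁ T.rotate
  rcases mem_insert.mp h₃ with rfl | h₃E
  · exact rooted e₁ h₁ e₂ h₂ T.rotate.rotate
  exact absurd (hasC3_of_isLooseTriangle h₁E h₂E h₃E T) hsat.2.1

/-- By `hx`, no edge meets `{x, y, z}` in `x` alone, so the link that saturation provides joins
`y` and `z`. -/
theorem IsSat3.exists_isLink (hsat : IsSat3 E) {x y z : V} (hxy : x ≠ y) (hxz : x ≠ z)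
    (hyz : y ≠ z) (ht : {x, y, z} ∉ E) (hx : ∀ f ∈ E, x ∈ f → y ∈ f ∨ z ∈ f) :
    ∃ f g, IsLink E y z f g ∧ x ∉ f ∧ x ∉ g := by
  obtain ⟨a, ha, c, hc, f, g, hl, htf, htg⟩ :=
    hsat.exists_isLink_of_notMem (by simp [card_insert_of_notMem, hxy, hxz, hyz]) ht
  have ne_x : ∀ {f a}, f ∈ E → ({x, y, z} : Finset V) ∩ f = {a} → a ∈ f → a ≠ x := by
    rintro f a hf htf haf rfl
    rcases hx f hf haf with hyf | hzf
    · exact hxy (eq_of_mem_of_inter_eq_singleton htf (by simp) hyf).symm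
    · exact hxz (eq_of_mem_of_inter_eq_singleton htf (by simp) hzf).symm
  have ⟨hf, hg, haf, hcg, _, hcf, _⟩ := hl
  have hax := ne_x hf htf haf
  have hcx := ne_x hg htg hcg
  have hxf : x ∉ f := fun h => hax (eq_of_mem_of_inter_eq_singleton htf (by simp) h).symm
  have hxg : x ∉ g := fun h => hcx (eq_of_mem_of_inter_eq_singleton htg (by simp) h).symm
  have hac : a ≠ c := fun h => hcf (h ▸ haf)
  simp only [mem_insert, mem_singleton] at ha hc
  rcases ha with rfl | rfl | rfl <;> rcases hc with rfl | rfl | rfl <;> try contradiction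
  · exact ⟨f, g, hl, hxf, hxg⟩
  · exact ⟨g, f, hl.symm, hxg, hxf⟩

theorem exists_eq_or_eq_of_deg_eq_two {v : V} {e : Finset V} (hd : deg E v = 2) (he : e ∈ E)
    (hv : v ∈ e) : ∃ e' ∈ E, v ∈ e' ∧ e' ≠ e ∧ ∀ f ∈ E, v ∈ f → f = e ∨ f = e' := by
  obtain ⟨e', he', hne⟩ := exists_mem_ne (s := E.filter (v ∈ ·)) (by unfold deg at hd; omega) e
  rw [mem_filter] at he'
  refine ⟨e', he'.1, he'.2, hne, fun f hf hvf => ?_⟩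
  have hsub : {e, e'} ⊆ E.filter (v ∈ ·) := by simp [insert_subset_iff, he, hv, he']
  simpa using mem_of_subset_filter_of_card_le hsub (by rw [card_pair hne.symm]; exact hd.le) hf hvf

theorem eq_or_eq_or_eq_of_deg_le_three {v : V} {a b c f : Finset V} (hd : deg E v ≤ 3)
    (ha : a ∈ E) (hb : b ∈ E) (hc : c ∈ E) (hva : v ∈ a) (hvb : v ∈ b) (hvc : v ∈ c)
    (hab : a ≠ b) (hac : a ≠ c) (hbc : b ≠ c) (hf : f ∈ E) (hvf : v ∈ f) :
    f = a ∨ f = b ∨ f = c := by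
  have hsub : {a, b, c} ⊆ E.filter (v ∈ ·) := by
    simp [insert_subset_iff, ha, hb, hc, hva, hvb, hvc]
  have hcard : ({a, b, c} : Finset (Finset V)).card = 3 := by
    simp [card_insert_of_notMem, hab, hac, hbc]
  simpa using mem_of_subset_filter_of_card_le hsub (hcard ▸ hd) hf hvf

theorem eq_of_codeg_eq_one {u v : V} {e f : Finset V} (hc : codeg E u v = 1) (he : e ∈ E)
    (hue : u ∈ e) (hve : v ∈ e) (hf : f ∈ E) (huf : u ∈ f) (hvf : v ∈ f) : f = e :=
  card_le_one.mp hc.le f (mem_filter.mpr ⟨hf, huf, hvf⟩) e (mem_filter.mpr ⟨he, hue, hve⟩)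

section Configuration

variable {h v₁ v₂ : V} {e' : Finset V}

theorem exists_edge_avoiding_v₁ (hsat : IsSat3 E) (he : {h, v₁, v₂} ∈ E) (hv₁e' : v₁ ∈ e')
    (hv₂e' : v₂ ∈ e') (hv₁ : ∀ f ∈ E, v₁ ∈ f → f = {h, v₁, v₂} ∨ f = e') {p : V}
    (hp : p ∉ insert h e') : ∃ g ∈ E, v₂ ∈ g ∧ v₁ ∉ g ∧ p ∉ g := by
  obtain ⟨-, -, hv₁v₂⟩ := ne_of_card_eq_three (hsat.1 _ he)
  rw [mem_insert, not_or] at hp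
  have hpv₁ : v₁ ≠ p := fun heq => hp.2 (heq ▸ hv₁e')
  have hpv₂ : v₂ ≠ p := fun heq => hp.2 (heq ▸ hv₂e')
  obtain ⟨f, g, ⟨hf, -, hv₂f, -, -, hpf, -⟩, hv₁f, -⟩ := hsat.exists_isLink hv₁v₂ hpv₁ hpv₂
    (fun ht => by
      have hpt : p ∈ ({v₁, v₂, p} : Finset V) := by simp
      rcases hv₁ _ ht (by simp) with heq | heq <;> rw [heq] at hpt
      · simp [hp.1, hpv₁.symm, hpv₂.symm] at hpt
      · exact hp.2 hpt)
    (fun f hf hv₁f => by rcases hv₁ f hf hv₁f with rfl | rfl <;> simp [hv₂e'])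
  exact ⟨f, hf, hv₂f, hv₁f, hpf⟩

theorem v₂_notMem_of_deg_le_three [Fintype V] (hsat : IsSat3 E) (hV : 5 ≤ Fintype.card V)
    (he : {h, v₁, v₂} ∈ E) (he' : e' ∈ E) (hv₁e' : v₁ ∈ e') (hhe' : h ∉ e')
    (hv₁ : ∀ f ∈ E, v₁ ∈ f → f = {h, v₁, v₂} ∨ f = e') (hd₂ : deg E v₂ ≤ 3) : v₂ ∉ e' := by
  intro hv₂e'
  obtain ⟨hhv₁, hhv₂, hv₁v₂⟩ := ne_of_card_eq_three (hsat.1 _ he)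
  obtain ⟨c, hcv₁, hcv₂, rfl⟩ := exists_eq_of_card_eq_three (hsat.1 _ he') hv₁e' hv₂e' hv₁v₂
  have hch : c ≠ h := by rintro rfl; simp at hhe'
  obtain ⟨z, -, hz⟩ := exists_mem_notMem_of_card_lt_card (s := {h, v₁, v₂, c}) (t := univ)
    (card_le_four.trans_lt (by rw [card_univ]; omega))
  have avoiding : ∀ p ∉ ({h, v₁, v₂, c} : Finset V), ∃ g ∈ E, v₂ ∈ g ∧ v₁ ∉ g ∧ p ∉ g :=
    fun _ hp => exists_edge_avoiding_v₁ hsat he hv₁e' hv₂e' hv₁ hp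
  obtain ⟨g, hg, hv₂g, hv₁g, -⟩ := avoiding z hz
  have edges_v₂ : ∀ f ∈ E, v₂ ∈ f → f = {h, v₁, v₂} ∨ f = {v₁, v₂, c} ∨ f = g :=
    fun _ hf hv₂f => eq_or_eq_or_eq_of_deg_le_three hd₂ he he' hg (by simp) (by simp) hv₂g
      (fun heq => hhe' (heq ▸ by simp)) (fun heq => hv₁g (heq ▸ by simp))
      (fun heq => hv₁g (heq ▸ by simp)) hf hv₂f
  have hg_eq : g = {h, v₂, c} := by
    refine eq_of_subset_of_card_le (fun p hpg => ?_) (card_le_three.trans (hsat.1 g hg).ge)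
    by_contra hp
    have hpv₁ : p ≠ v₁ := fun hpv₁ => hv₁g (hpv₁ ▸ hpg)
    obtain ⟨g', hg', hv₂g', hv₁g', hpg'⟩ := avoiding p (by simp_all)
    rcases edges_v₂ g' hg' hv₂g' with rfl | rfl | rfl
    · simp at hv₁g'
    · simp at hv₁g'
    · exact hpg' hpg
  obtain ⟨f₂, f₃, hl, hv₁f₂, hv₁f₃⟩ := hsat.exists_isLink (Ne.symm hhv₁) (Ne.symm hcv₁)
    (Ne.symm hch) (fun ht => by
      rcases hv₁ _ ht (by simp) with heq | heq
      · have hc : c ∈ ({h, v₁, v₂} : Finset V) := heq ▸ by simp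
        simp [hch, hcv₁, hcv₂] at hc
      · exact hhe' (heq ▸ by simp))
    (fun f hf hv₁f => by rcases hv₁ f hf hv₁f with rfl | rfl <;> simp)
  have ⟨_, _, _, _, hhf₃, hcf₂, _⟩ := hl
  have hg' : {h, c, v₂} ∈ E := by rwa [hg_eq, pair_comm] at hg
  rcases hl.mem_or_mem_of_not_hasC3 hsat.2.1 hg' with hv₂f | hv₂f
  · rcases edges_v₂ f₂ hl.1 hv₂f with rfl | rfl | rfl
    · simp at hv₁f₂
    · simp at hv₁f₂
    · simp [hg_eq] at hcf₂
  · rcases edges_v₂ f₃ hl.2.1 hv₂f with rfl | rfl | rfl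
    · simp at hv₁f₃
    · simp at hv₁f₃
    · simp [hg_eq] at hhf₃

theorem not_goodPair_h_v₁ (hsat : IsSat3 E) (he : {h, v₁, v₂} ∈ E)
    (hv₁ : ∀ f ∈ E, v₁ ∈ f → f = {h, v₁, v₂} ∨ f = e') (hv₂e' : v₂ ∉ e')
    (hc₂ : codeg E h v₂ ≤ 2) : ¬ GoodPair E h v₁ := by
  rintro ⟨E₁, E₂, hl⟩
  have ⟨hE₁, hE₂, hhE₁, hv₁E₂, hhE₂, hv₁E₁, w, hw, hi⟩ := hl
  obtain ⟨hhv₁, hhv₂, hv₁v₂⟩ := ne_of_card_eq_three (hsat.1 _ he)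
  obtain rfl : E₂ = e' := (hv₁ E₂ hE₂ hv₁E₂).resolve_left fun heq => hhE₂ (heq ▸ by simp)
  have hv₂E₁ : v₂ ∈ E₁ := (hl.mem_or_mem_of_not_hasC3 hsat.2.1 he).resolve_right hv₂e'
  have ⟨hwE₁, hwE₂⟩ := mem_of_inter_eq_singleton hi
  simp only [mem_insert, mem_singleton, not_or] at hw
  have hwv₂ : w ≠ v₂ := fun hwv₂ => hv₂e' (hwv₂ ▸ hwE₂)
  have hE₁_eq : E₁ = {v₂, w, h} :=
    eq_of_card_eq_three (hsat.1 _ hE₁) hv₂E₁ hwE₁ hhE₁ hwv₂.symm hhv₂.symm hw.1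
  have edges_hv₂ : ∀ f ∈ E, h ∈ f → v₂ ∈ f → f = {h, v₁, v₂} ∨ f = E₁ := by
    intro f hf hhf hv₂f
    have hne : ({h, v₁, v₂} : Finset V) ≠ E₁ := fun heq => hv₁E₁ (heq ▸ by simp)
    have hsub : {{h, v₁, v₂}, E₁} ⊆ E.filter (fun f => h ∈ f ∧ v₂ ∈ f) := by
      simp [insert_subset_iff, he, hE₁, hhE₁, hv₂E₁]
    simpa using mem_of_subset_filter_of_card_le hsub (by rw [card_pair hne]; exact hc₂) hf
      ⟨hhf, hv₂f⟩
  obtain ⟨f₂, f₃, hl', hv₁f₂, hv₁f₃⟩ := hsat.exists_isLink hv₁v₂ (Ne.symm hw.2) hwv₂.symm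
    (fun ht => by
      rcases hv₁ _ ht (by simp) with heq | heq
      · have hwe : w ∈ ({h, v₁, v₂} : Finset V) := heq ▸ by simp
        simp [hw.1, hw.2, hwv₂] at hwe
      · exact hv₂e' (heq ▸ by simp))
    (fun f hf hv₁f => by rcases hv₁ f hf hv₁f with rfl | rfl <;> simp [hwE₂])
  have ⟨hf₂, _, hv₂f₂, _, _, hwf₂, _⟩ := hl'
  have hhf₂ : h ∉ f₂ := fun hhf₂ => by
    rcases edges_hv₂ f₂ hf₂ hhf₂ hv₂f₂ with rfl | rfl
    exacts [hv₁f₂ (by simp), hwf₂ hwE₁]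
  have hhf₃ : h ∈ f₃ := (hl'.mem_or_mem_of_not_hasC3 hsat.2.1 (hE₁_eq ▸ hE₁)).resolve_left hhf₂
  have he' : {v₂, h, v₁} ∈ E := by rwa [insert_comm v₂ h, pair_comm v₂ v₁]
  rcases (hl'.of_mem_right hhf₃ hhf₂).mem_or_mem_of_not_hasC3 hsat.2.1 he' with hv₁f | hv₁f
  exacts [hv₁f₂ hv₁f, hv₁f₃ hv₁f]

theorem not_goodPair_h_v₂ (hfree : ¬ HasC3 E) (he : {h, v₁, v₂} ∈ E)
    (hv₁ : ∀ f ∈ E, v₁ ∈ f → f = {h, v₁, v₂} ∨ f = e') (hv₂e' : v₂ ∉ e')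
    (hc₁ : codeg E h v₁ = 1) : ¬ GoodPair E h v₂ := by
  rintro ⟨F₁, F₂, hl⟩
  have ⟨hF₁, hF₂, hhF₁, hv₂F₂, hhF₂, hv₂F₁, _⟩ := hl
  rcases hl.mem_or_mem_of_not_hasC3 hfree (by rwa [pair_comm] at he) with hv₁F | hv₁F
  · exact hv₂F₁ (eq_of_codeg_eq_one hc₁ he (by simp) (by simp) hF₁ hhF₁ hv₁F ▸ by simp)
  · rcases hv₁ F₂ hF₂ hv₁F with rfl | rfl
    exacts [hhF₂ (by simp), hv₂e' hv₂F₂]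

end Configuration

end Hypergraphs

theorem h22_h23_bad_pairs {V : Type*} [Fintype V] [DecidableEq V]
    (E : Finset (Finset V)) (hsat : IsSat3 E) (hcard : 6 ≤ Fintype.card V)
    (h v₁ v₂ : V) (he : ({h, v₁, v₂} : Finset V) ∈ E)
    (hd1 : deg E v₁ = 2) (hd2 : deg E v₂ = 2 ∨ deg E v₂ = 3)
    (hc1 : codeg E h v₁ = 1) (hc2 : codeg E h v₂ < deg E v₂) :
    ¬ GoodPair E h v₁ ∧ ¬ GoodPair E h v₂ := by
  obtain ⟨e', he', hv₁e', hne, hv₁⟩ := exists_eq_or_eq_of_deg_eq_two hd1 he (by simp)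
  have hhe' : h ∉ e' := fun hhe' =>
    hne (eq_of_codeg_eq_one hc1 he (by simp) (by simp) he' hhe' hv₁e')
  have hv₂e' : v₂ ∉ e' :=
    v₂_notMem_of_deg_le_three hsat (by omega) he he' hv₁e' hhe' hv₁ (by omega)
  exact ⟨not_goodPair_h_v₁ hsat he hv₁ hv₂e' (by omega),
    not_goodPair_h_v₂ hsat.2.1 he hv₁ hv₂e' hc1⟩
end

section
/- Let G be a C_3^{(3)}-saturated 3-uniform hypergraph on n ≥ 6 vertices and let {h, v_1, v_2} ∈ E(G) be an edge with d(v_1) = 2, d(v_2) ∈ {2, 3}, d(hv_1) = 1, and d(hv_2) < d(v_2). Then there do not exist vertices a, b ∈ V(G) \ {h, v_1, v_2} such that both {v_1, a, b} ∈ E(G) and {v_2, a, b} ∈ E(G). -/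
open Finset

variable {V : Type*}

/-!
Saturation is used only through probes: for a non-edge `t`, the loose triangle created by adding
`t` must use `t`, so two edges of `G` meeting in one vertex meet `t` in single, distinct vertices.
Write `e = {h, v₁, v₂}`. The edges at `v₁` are `e` and `{v₁, a, b}`; besides `e` and `{v₂, a, b}`
there is at most one more edge `f` at `v₂`. Probing `{v₁, v₂, a}` shows `a, b ∉ f`, which already
excludes `d(v₂) = 2`, where `f = {v₂, a, b}`. If `f = {v₂, h, w}`, probing `{v₁, v₂, w}` forces a
loose triangle in `G`; so `f = {v₂, p, q}` with `p, q` new, and then probing `{v₁, p, q}` does.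
-/

variable [DecidableEq V] {E : Finset (Finset V)}

theorem Finset.inter_eq_singleton_iff {s t : Finset V} {x : V} :
    s ∩ t = {x} ↔ x ∈ s ∧ ∀ y ∈ s, y ∈ t ↔ y = x := by
  simp only [Finset.ext_iff, mem_inter, mem_singleton]
  grind

theorem Finset.triple_inter_eq_singleton_iff {x y z w : V} {s : Finset V} :
    ({x, y, z} : Finset V) ∩ s = {w} ↔
      (w = x ∨ w = y ∨ w = z) ∧ (x ∈ s ↔ x = w) ∧ (y ∈ s ↔ y = w) ∧ (z ∈ s ↔ z = w) := by
  simp [inter_eq_singleton_iff]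

theorem Finset.xor_of_triple_inter_eq_singleton {x y z w : V} {s : Finset V}
    (h : ({x, y, z} : Finset V) ∩ s = {w}) (hx : x ∉ s) (hyz : y ≠ z) : Xor (y ∈ s) (z ∈ s) := by
  rw [triple_inter_eq_singleton_iff] at h
  unfold Xor
  grind

theorem Finset.ne_of_inter_eq_singleton {s t : Finset V} {x : V} (hs : 1 < s.card)
    (h : s ∩ t = {x}) : s ≠ t := by
  rintro rfl
  rw [inter_self] at h
  simp [h] at hs

theorem Finset.ne_and_ne_and_ne_of_card_eq_three {x y z : V}
    (h : ({x, y, z} : Finset V).card = 3) : x ≠ y ∧ x ≠ z ∧ y ≠ z := by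
  refine ⟨?_, ?_, ?_⟩ <;> rintro rfl <;> grind [card_le_two]

theorem hasC3_of_inter_eq_singleton {e₁ e₂ e₃ : Finset V} (h₁ : e₁ ∈ E) (h₂ : e₂ ∈ E)
    (h₃ : e₃ ∈ E) {x y z : V} (hxy : e₁ ∩ e₂ = {x}) (hyz : e₂ ∩ e₃ = {y})
    (hxz : e₁ ∩ e₃ = {z}) (hne : x ≠ z) : HasC3 E := by
  have hx : x ∈ e₁ ∩ e₂ := hxy ▸ mem_singleton_self x
  have hy : y ∈ e₂ ∩ e₃ := hyz ▸ mem_singleton_self y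
  have hz : z ∈ e₁ ∩ e₃ := hxz ▸ mem_singleton_self z
  have dxy : x ≠ y := by
    rintro rfl
    exact hne (mem_singleton.1 (hxz ▸ mem_inter.2 ⟨(mem_inter.1 hx).1, (mem_inter.1 hy).2⟩))
  have dyz : y ≠ z := by
    rintro rfl
    exact hne (mem_singleton.1 (hxy ▸ mem_inter.2 ⟨(mem_inter.1 hz).1, (mem_inter.1 hy).1⟩)).symm
  refine ⟨e₁, h₁, e₂, h₂, e₃, h₃, x, y, z, hxy, hyz, hxz, dxy, dyz, hne, ?_⟩
  rw [hxy, singleton_inter_of_notMem]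
  intro hx₃
  exact dxy (mem_singleton.1 (hyz ▸ mem_inter.2 ⟨(mem_inter.1 hx).2, hx₃⟩))

theorem IsSat3.exists_inter_eq_singleton_of_notMem (hsat : IsSat3 E) {t : Finset V}
    (ht : t.card = 3) (htE : t ∉ E) : ∃ g₁ ∈ E, ∃ g₂ ∈ E, ∃ α β γ : V,
      α ≠ β ∧ t ∩ g₁ = {α} ∧ t ∩ g₂ = {β} ∧ g₁ ∩ g₂ = {γ} := by
  obtain ⟨huni, hfree, hins⟩ := hsat
  obtain ⟨e₁, h₁, e₂, h₂, e₃, h₃, x, y, z, hxy, hyz, hxz, dxy, dyz, dxz, hempty⟩ :=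
    hins t ht htE
  have hcard : ∀ s ∈ insert t E, 1 < s.card := by
    intro s hs
    rw [(mem_insert.1 hs).elim (· ▸ ht) (huni s)]
    norm_num
  have hE : ∀ s ∈ insert t E, s ≠ t → s ∈ E := fun s hs hst => (mem_insert.1 hs).resolve_left hst
  by_cases t₁ : e₁ = t
  · subst t₁
    exact ⟨e₂, hE _ h₂ (ne_of_inter_eq_singleton (hcard _ h₁) hxy).symm, e₃,
      hE _ h₃ (ne_of_inter_eq_singleton (hcard _ h₁) hxz).symm, x, z, y, dxz, hxy, hxz, hyz⟩
  by_cases t₂ : e₂ = t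
  · subst t₂
    exact ⟨e₁, hE _ h₁ t₁, e₃, hE _ h₃ (ne_of_inter_eq_singleton (hcard _ h₂) hyz).symm,
      x, y, z, dxy, inter_comm e₁ e₂ ▸ hxy, hyz, hxz⟩
  by_cases t₃ : e₃ = t
  · subst t₃
    exact ⟨e₁, hE _ h₁ t₁, e₂, hE _ h₂ t₂, z, y, x, dyz.symm, inter_comm e₁ e₃ ▸ hxz,
      inter_comm e₂ e₃ ▸ hyz, hxy⟩
  exact (hfree ⟨e₁, hE _ h₁ t₁, e₂, hE _ h₂ t₂, e₃, hE _ h₃ t₃, x, y, z,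
    hxy, hyz, hxz, dxy, dyz, dxz, hempty⟩).elim

theorem exists_edges_of_deg_le_three {v : V} {g₁ g₂ : Finset V} (h₁ : g₁ ∈ E) (h₂ : g₂ ∈ E)
    (hv₁ : v ∈ g₁) (hv₂ : v ∈ g₂) (hne : g₁ ≠ g₂) (hd : deg E v ≤ 3) :
    ∃ g₃ ∈ E, v ∈ g₃ ∧ g₃ ≠ g₁ ∧ ∀ g ∈ E, v ∈ g → g = g₁ ∨ g = g₂ ∨ g = g₃ := by
  set S := E.filter (v ∈ ·)
  have hsub : {g₁, g₂} ⊆ S := by grind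
  have hrest : (S \ {g₁, g₂}).card ≤ 1 := by
    rw [card_sdiff_of_subset hsub, card_pair hne]; exact Nat.sub_le_of_le_add hd
  have hother : ∀ g ∈ E, v ∈ g → g ≠ g₁ → g ≠ g₂ → g ∈ S \ {g₁, g₂} := by grind
  rcases (S \ {g₁, g₂}).eq_empty_or_nonempty with hempty | ⟨g₃, hg₃⟩
  · refine ⟨g₂, h₂, hv₂, hne.symm, fun g hg hv => ?_⟩
    by_contra! hg'
    exact notMem_empty g (hempty ▸ hother g hg hv hg'.1 hg'.2.1)
  · have hg₃' := mem_sdiff.1 hg₃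
    refine ⟨g₃, (mem_filter.1 hg₃'.1).1, (mem_filter.1 hg₃'.1).2, by grind, fun g hg hv => ?_⟩
    by_contra! hg'
    exact hg'.2.2 (card_le_one.1 hrest g (hother g hg hv hg'.1 hg'.2.1) g₃ hg₃)

theorem eq_or_eq_of_deg_le_two {v : V} {g₁ g₂ : Finset V} (h₁ : g₁ ∈ E) (h₂ : g₂ ∈ E)
    (hv₁ : v ∈ g₁) (hv₂ : v ∈ g₂) (hne : g₁ ≠ g₂) (hd : deg E v ≤ 2) :
    ∀ g ∈ E, v ∈ g → g = g₁ ∨ g = g₂ := by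
  have hS : E.filter (v ∈ ·) = {g₁, g₂} :=
    (eq_of_subset_of_card_le (by grind) (by rw [card_pair hne]; exact hd)).symm
  intro g hg hv
  have hgS : g ∈ E.filter (v ∈ ·) := mem_filter.2 ⟨hg, hv⟩
  simpa [hS] using hgS

theorem Finset.exists_eq_triple_of_mem {s : Finset V} {x : V} (hs : s.card = 3) (hx : x ∈ s) :
    ∃ y z, s = {x, y, z} := by
  obtain ⟨y, z, -, hyz⟩ := card_eq_two.1 (by rw [card_erase_of_mem hx, hs] : (s.erase x).card = 2)
  exact ⟨y, z, by rw [← hyz, insert_erase hx]⟩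

theorem Finset.exists_eq_triple_of_mem_of_mem {s : Finset V} {x y : V} (hs : s.card = 3)
    (hx : x ∈ s) (hy : y ∈ s) (hxy : x ≠ y) : ∃ z, s = {x, y, z} := by
  obtain ⟨y', z', rfl⟩ := exists_eq_triple_of_mem hs hx
  simp only [mem_insert, mem_singleton] at hy
  rcases hy with rfl | rfl | rfl
  · exact absurd rfl hxy
  · exact ⟨z', rfl⟩
  · exact ⟨y', by rw [pair_comm]⟩

variable {h v₁ v₂ a b : V} {f : Finset V}

/-- `f` is the third edge at `v₂` when `d(v₂) = 3`, and `{v₂, a, b}` when `d(v₂) = 2`. -/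
structure House (E : Finset (Finset V)) (h v₁ v₂ a b : V) (f : Finset V) : Prop where
  nodup : [h, v₁, v₂, a, b].Nodup
  roof_mem : {h, v₁, v₂} ∈ E
  left_mem : {v₁, a, b} ∈ E
  right_mem : {v₂, a, b} ∈ E
  f_mem : f ∈ E
  mem_f : v₂ ∈ f
  f_ne_roof : f ≠ {h, v₁, v₂}
  edges_v₁ : ∀ g ∈ E, v₁ ∈ g → g = {h, v₁, v₂} ∨ g = {v₁, a, b}
  edges_v₂ : ∀ g ∈ E, v₂ ∈ g → g = {h, v₁, v₂} ∨ g = {v₂, a, b} ∨ g = f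

namespace House

theorem ne (H : House E h v₁ v₂ a b f) :
    h ≠ v₁ ∧ h ≠ v₂ ∧ h ≠ a ∧ h ≠ b ∧ v₁ ≠ v₂ ∧ v₁ ≠ a ∧ v₁ ≠ b ∧ v₂ ≠ a ∧ v₂ ≠ b ∧ a ≠ b := by
  simpa [List.nodup_cons, or_imp, forall_and, and_assoc] using H.nodup

theorem swap (H : House E h v₁ v₂ a b f) : House E h v₁ v₂ b a f where
  nodup := H.nodup.perm (.cons _ (.cons _ (.cons _ (.swap _ _ _))))
  roof_mem := H.roof_mem
  left_mem := pair_comm a b ▸ H.left_mem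
  right_mem := pair_comm a b ▸ H.right_mem
  f_mem := H.f_mem
  mem_f := H.mem_f
  f_ne_roof := H.f_ne_roof
  edges_v₁ := pair_comm a b ▸ H.edges_v₁
  edges_v₂ := pair_comm a b ▸ H.edges_v₂

theorem exists_of_v₁_triple (H : House E h v₁ v₂ a b f) (hsat : IsSat3 E) {y z : V}
    (hy : v₁ ≠ y) (hz : v₁ ≠ z) (hyz : y ≠ z) (h₁ : ¬({v₁, y, z} : Finset V) ⊆ {h, v₁, v₂})
    (h₂ : ¬({v₁, y, z} : Finset V) ⊆ {v₁, a, b}) :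
    ∃ g₁ ∈ E, ∃ g₂ ∈ E, ∃ α β γ : V, α ≠ β ∧ {v₁, y, z} ∩ g₁ = {α} ∧
      {v₁, y, z} ∩ g₂ = {β} ∧ g₁ ∩ g₂ = {γ} :=
  hsat.exists_inter_eq_singleton_of_notMem (card_eq_three.2 ⟨_, _, _, hy, hz, hyz, rfl⟩)
    fun ht => (H.edges_v₁ _ ht (mem_insert_self _ _)).elim (fun e => h₁ e.le) (fun e => h₂ e.le)

/-- Every edge through `v₁` or `v₂` meets `{v₁, v₂, a}` in two vertices. -/
theorem eq_a_of_inter_eq_singleton (H : House E h v₁ v₂ a b f) (haf : a ∈ f) {g : Finset V}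
    (hg : g ∈ E) {δ : V} (hδ : ({v₁, v₂, a} : Finset V) ∩ g = {δ}) : δ = a := by
  have hd := H.ne
  obtain ⟨hδ, h₁, h₂, h₃⟩ := triple_inter_eq_singleton_iff.1 hδ
  rcases hδ with rfl | rfl | rfl
  · rcases H.edges_v₁ g hg (h₁.2 rfl) with rfl | rfl <;> grind
  · rcases H.edges_v₂ g hg (h₂.2 rfl) with rfl | rfl | rfl <;> grind
  · rfl

theorem a_notMem_f (H : House E h v₁ v₂ a b f) (hsat : IsSat3 E) : a ∉ f := by
  have hd := H.ne
  intro haf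
  obtain ⟨g₁, hg₁, g₂, hg₂, α, β, -, hαβ, hα, hβ, -⟩ :=
    H.exists_of_v₁_triple hsat (y := v₂) (z := a) (by grind) (by grind) (by grind)
      (by simp only [insert_subset_iff]; grind) (by simp only [insert_subset_iff]; grind)
  exact hαβ ((H.eq_a_of_inter_eq_singleton haf hg₁ hα).trans
    (H.eq_a_of_inter_eq_singleton haf hg₂ hβ).symm)

theorem v₁_notMem_f (H : House E h v₁ v₂ a b f) (ha : a ∉ f) : v₁ ∉ f :=
  fun hv => (H.edges_v₁ f H.f_mem hv).elim H.f_ne_roof (fun e => ha (e ▸ by simp))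

theorem hasC3_of_mem_of_notMem (H : House E h v₁ v₂ a b f) (ha : a ∉ f) (hb : b ∉ f)
    {m : Finset V} (hm : m ∈ E) (hv₁ : v₁ ∉ m) (hv₂ : v₂ ∉ m) (ham : a ∈ m) (hbm : b ∉ m)
    (hf : h ∈ m ∨ ∃ x, f ∩ m = {x}) : HasC3 E := by
  have hd := H.ne
  rcases hf with hh | ⟨x, hx⟩
  · exact hasC3_of_inter_eq_singleton H.roof_mem H.left_mem hm (x := v₁) (y := a) (z := h)
      (by simp only [triple_inter_eq_singleton_iff, mem_insert, mem_singleton]; grind)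
      (by simp only [triple_inter_eq_singleton_iff]; grind)
      (by simp only [triple_inter_eq_singleton_iff]; grind) (by grind)
  · have hxf := (mem_inter.1 (hx ▸ mem_singleton_self x))
    have := H.mem_f
    exact hasC3_of_inter_eq_singleton H.right_mem H.f_mem hm (x := v₂) (y := x) (z := a)
      (by simp only [triple_inter_eq_singleton_iff]; grind) hx
      (by simp only [triple_inter_eq_singleton_iff]; grind) (by grind)

theorem hasC3_of_xor (H : House E h v₁ v₂ a b f) (ha : a ∉ f) (hb : b ∉ f) {m : Finset V}
    (hm : m ∈ E) (hv₁ : v₁ ∉ m) (hv₂ : v₂ ∉ m) (hab : Xor (a ∈ m) (b ∈ m))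
    (hf : h ∈ m ∨ ∃ x, f ∩ m = {x}) : HasC3 E := by
  rcases hab with ⟨ham, hbm⟩ | ⟨hbm, ham⟩
  · exact H.hasC3_of_mem_of_notMem ha hb hm hv₁ hv₂ ham hbm hf
  · exact H.swap.hasC3_of_mem_of_notMem hb ha hm hv₁ hv₂ hbm ham hf

theorem h_notMem_f (H : House E h v₁ v₂ a b f) (hsat : IsSat3 E) : h ∉ f := by
  have hd := H.ne
  have ha := H.a_notMem_f hsat
  have hb := H.swap.a_notMem_f hsat
  have hv₁ := H.v₁_notMem_f ha
  intro hhf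
  obtain ⟨w, hfw⟩ := exists_eq_triple_of_mem_of_mem (hsat.1 f H.f_mem) H.mem_f hhf (by grind)
  have hwf : w ∈ f := by simp [hfw]
  have hw := ne_and_ne_and_ne_of_card_eq_three (hfw ▸ hsat.1 f H.f_mem)
  have side : ∀ m ∈ E, w ∈ m → v₁ ∉ m → v₂ ∉ m → Xor (a ∈ m) (b ∈ m) → False := by
    intro m hm hwm h₁ h₂ hab
    refine hsat.2.1 (H.hasC3_of_xor ha hb hm h₁ h₂ hab (or_iff_not_imp_left.2 fun hhm => ⟨w, ?_⟩))
    rw [hfw, triple_inter_eq_singleton_iff]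
    grind
  have classify : ∀ g ∈ E, ∀ δ, ({v₁, v₂, w} : Finset V) ∩ g = {δ} →
      g = {v₁, a, b} ∨ g = {v₂, a, b} ∨ (δ = w ∧ v₁ ∉ g ∧ v₂ ∉ g) := by
    intro g hg δ hδ
    obtain ⟨hδ, h₁, h₂, h₃⟩ := triple_inter_eq_singleton_iff.1 hδ
    rcases hδ with rfl | rfl | rfl
    · rcases H.edges_v₁ g hg (h₁.2 rfl) with rfl | rfl <;> grind
    · rcases H.edges_v₂ g hg (h₂.2 rfl) with rfl | rfl | rfl <;> grind
    · grind
  obtain ⟨g₁, hg₁, g₂, hg₂, α, β, γ, hαβ, hα, hβ, hγ⟩ :=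
    H.exists_of_v₁_triple hsat (y := v₂) (z := w) (by grind) (by grind) (by grind)
      (by simp only [insert_subset_iff]; grind) (by simp only [insert_subset_iff]; grind)
  rcases classify g₁ hg₁ α hα with rfl | rfl | ⟨rfl, hv₁g₁, hv₂g₁⟩ <;>
    rcases classify g₂ hg₂ β hβ with rfl | rfl | ⟨rfl, hv₁g₂, hv₂g₂⟩
  · exact hαβ (singleton_inj.1 (hα.symm.trans hβ))
  · have := triple_inter_eq_singleton_iff.1 hγ; grind
  · exact side g₂ hg₂ (by grind) hv₁g₂ hv₂g₂ (xor_of_triple_inter_eq_singleton hγ hv₁g₂ (by grind))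
  · have := triple_inter_eq_singleton_iff.1 hγ; grind
  · exact hαβ (singleton_inj.1 (hα.symm.trans hβ))
  · exact side g₂ hg₂ (by grind) hv₁g₂ hv₂g₂ (xor_of_triple_inter_eq_singleton hγ hv₂g₂ (by grind))
  · rw [inter_comm] at hγ
    exact side g₁ hg₁ (by grind) hv₁g₁ hv₂g₁ (xor_of_triple_inter_eq_singleton hγ hv₁g₁ (by grind))
  · rw [inter_comm] at hγ
    exact side g₁ hg₁ (by grind) hv₁g₁ hv₂g₁ (xor_of_triple_inter_eq_singleton hγ hv₂g₁ (by grind))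
  · exact hαβ rfl

theorem hasC3_of_roof_f (H : House E h v₁ v₂ a b f) (hhf : h ∉ f) (hv₁f : v₁ ∉ f)
    {m : Finset V} (hm : m ∈ E) (hv₁ : v₁ ∉ m) (hv₂ : v₂ ∉ m) (hh : h ∈ m) {x : V}
    (hx : f ∩ m = {x}) : HasC3 E := by
  have hd := H.ne
  have := H.mem_f
  exact hasC3_of_inter_eq_singleton H.roof_mem H.f_mem hm (x := v₂) (y := x) (z := h)
    (by simp only [triple_inter_eq_singleton_iff]; grind) hx
    (by simp only [triple_inter_eq_singleton_iff]; grind) (by grind)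

theorem not_isSat3 (H : House E h v₁ v₂ a b f) : ¬IsSat3 E := by
  intro hsat
  have hd := H.ne
  have ha := H.a_notMem_f hsat
  have hb := H.swap.a_notMem_f hsat
  have hv₁ := H.v₁_notMem_f ha
  have hh := H.h_notMem_f hsat
  obtain ⟨p, q, hf⟩ := exists_eq_triple_of_mem (hsat.1 f H.f_mem) H.mem_f
  have hpq := ne_and_ne_and_ne_of_card_eq_three (hf ▸ hsat.1 f H.f_mem)
  have hp : p ∈ f := by simp [hf]
  have hq : q ∈ f := by simp [hf]
  have classify : ∀ g ∈ E, ∀ δ, ({v₁, p, q} : Finset V) ∩ g = {δ} →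
      (δ = v₁ ∧ v₁ ∈ g) ∨ (v₁ ∉ g ∧ v₂ ∉ g ∧ f ∩ g = {δ}) := by
    intro g hg δ hδ
    obtain ⟨hδ, h₁, h₂, h₃⟩ := triple_inter_eq_singleton_iff.1 hδ
    by_cases hv₂ : v₂ ∈ g
    · rcases H.edges_v₂ g hg hv₂ with rfl | rfl | rfl <;> grind
    · rw [hf, triple_inter_eq_singleton_iff]
      grind
  have cross : ∀ g ∈ E, v₁ ∈ g → ∀ m ∈ E, v₁ ∉ m → v₂ ∉ m → ∀ δ, f ∩ m = {δ} →
      ∀ γ, g ∩ m = {γ} → False := by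
    intro g hg hv₁g m hm hv₁m hv₂m δ hδ γ hγ
    rcases H.edges_v₁ g hg hv₁g with rfl | rfl <;> rw [triple_inter_eq_singleton_iff] at hγ
    · exact hsat.2.1 (H.hasC3_of_roof_f hh hv₁ hm hv₁m hv₂m (by grind) hδ)
    · exact hsat.2.1 (H.hasC3_of_xor ha hb hm hv₁m hv₂m (by unfold Xor; grind) (.inr ⟨δ, hδ⟩))
  obtain ⟨g₁, hg₁, g₂, hg₂, α, β, γ, hαβ, hα, hβ, hγ⟩ :=
    H.exists_of_v₁_triple hsat (y := p) (z := q) (by grind) (by grind) (by grind)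
      (by simp only [insert_subset_iff]; grind) (by simp only [insert_subset_iff]; grind)
  rcases classify g₁ hg₁ α hα with ⟨rfl, hv₁g₁⟩ | ⟨hv₁g₁, hv₂g₁, hfg₁⟩ <;>
    rcases classify g₂ hg₂ β hβ with ⟨rfl, hv₁g₂⟩ | ⟨hv₁g₂, hv₂g₂, hfg₂⟩
  · exact hαβ rfl
  · exact cross g₁ hg₁ hv₁g₁ g₂ hg₂ hv₁g₂ hv₂g₂ β hfg₂ γ hγ
  · exact cross g₂ hg₂ hv₁g₂ g₁ hg₁ hv₁g₁ hv₂g₁ α hfg₁ γ (inter_comm g₁ g₂ ▸ hγ)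
  · exact hsat.2.1 (hasC3_of_inter_eq_singleton H.f_mem hg₁ hg₂ hfg₁ hγ hfg₂ hαβ)

end House

theorem h22_h23_no_house_general {V : Type*} [DecidableEq V]
    (E : Finset (Finset V)) (hsat : IsSat3 E)
    (h v₁ v₂ : V) (he : ({h, v₁, v₂} : Finset V) ∈ E)
    (hd1 : deg E v₁ = 2) (hd2 : deg E v₂ = 2 ∨ deg E v₂ = 3) :
    ¬ ∃ a b : V, a ∉ ({h, v₁, v₂} : Finset V) ∧ b ∉ ({h, v₁, v₂} : Finset V) ∧
      ({v₁, a, b} : Finset V) ∈ E ∧ ({v₂, a, b} : Finset V) ∈ E := by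
  rintro ⟨a, b, ha, hb, hf₁, hf₂⟩
  have hhv := ne_and_ne_and_ne_of_card_eq_three (hsat.1 _ he)
  have hab := ne_and_ne_and_ne_of_card_eq_three (hsat.1 _ hf₁)
  simp only [mem_insert, mem_singleton, not_or] at ha hb
  have hnodup : [h, v₁, v₂, a, b].Nodup := by
    simp only [List.nodup_cons, List.mem_cons, List.not_mem_nil, or_false, not_or,
      List.nodup_nil, and_true]
    grind
  have hef₁ : ({h, v₁, v₂} : Finset V) ≠ {v₁, a, b} := fun heq => by
    have : h ∈ ({v₁, a, b} : Finset V) := heq ▸ mem_insert_self _ _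
    simp only [mem_insert, mem_singleton] at this
    grind
  have hef₂ : ({h, v₁, v₂} : Finset V) ≠ {v₂, a, b} := fun heq => by
    have : h ∈ ({v₂, a, b} : Finset V) := heq ▸ mem_insert_self _ _
    simp only [mem_insert, mem_singleton] at this
    grind
  obtain ⟨f, hf, hv₂f, hfe, hedges₂⟩ :=
    exists_edges_of_deg_le_three (v := v₂) he hf₂ (by simp) (by simp) hef₂ (by omega)
  have hedges₁ := eq_or_eq_of_deg_le_two he hf₁ (by simp) (by simp) hef₁ hd1.le
  exact (House.mk hnodup he hf₁ hf₂ hf hv₂f hfe hedges₁ hedges₂).not_isSat3 hsat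

theorem h22_h23_no_house {V : Type*} [Fintype V] [DecidableEq V]
    (E : Finset (Finset V)) (hsat : IsSat3 E) (hcard : 6 ≤ Fintype.card V)
    (h v₁ v₂ : V) (he : ({h, v₁, v₂} : Finset V) ∈ E)
    (hd1 : deg E v₁ = 2) (hd2 : deg E v₂ = 2 ∨ deg E v₂ = 3)
    (hc1 : codeg E h v₁ = 1) (hc2 : codeg E h v₂ < deg E v₂) :
    ¬ ∃ a b : V, a ∉ ({h, v₁, v₂} : Finset V) ∧ b ∉ ({h, v₁, v₂} : Finset V) ∧
      ({v₁, a, b} : Finset V) ∈ E ∧ ({v₂, a, b} : Finset V) ∈ E :=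
  h22_h23_no_house_general E hsat h v₁ v₂ he hd1 hd2
end
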